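/- Let D be a Steiner 2-design S(2,k,v) with v > k^3 - 2k^2 + 2k. Then the 0-block intersection graph G_0 of D is not silver: for no maximum independent set I of G_0 does there exist a proper (r+1)-coloring of G_0 (where r is the common degree of G_0) making every vertex of I rainbow. -/

import Mathlib

/-!
For large `v` every maximum independent set of `G₀` is a pencil `T(x)` of `n = (v-1)/(k-1)`
blocks: the pencil is independent and has more than `k² - k + 1` blocks, while an intersecting
family of blocks that large has a common point. Now suppose a colouring with `r + 1` colours makes
every block of `T(x)` rainbow. Each closed neighbourhood has exactly `r + 1` blocks, so it contains
each colour exactly once. Fix a colour and count the pairs (block of `T(x)`, block of that colour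
in its closed neighbourhood). A block through `x` is adjacent to no other block of `T(x)`, and a
block not through `x` is adjacent to exactly `n - k` of them. Since `2k < n`, at most one block of
the colour avoids `x`, so at least `k` blocks of `T(x)` have that colour. Summing over the colours
gives `(r + 1) k ≤ n`, contradicting `n < (r + 1) k`.
-/

open Finset

variable {α : Type*}

/-- A Steiner 2-design `S(2,k,v)`: the point set has `v` points, every block has
`k` points, and every pair of distinct points lies in exactly one block. -/
def IsSteiner [Fintype α] [DecidableEq α] (v k : ℕ) (B : Finset (Finset α)) : Prop :=
  Fintype.card α = v ∧ (∀ b ∈ B, b.card = k) ∧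
    ∀ x y : α, x ≠ y → (B.filter fun b => x ∈ b ∧ y ∈ b).card = 1

/-- The `i`-block intersection graph: vertices are the blocks of `B`, two blocks
adjacent iff they intersect in exactly `i` points. -/
def BIG [DecidableEq α] (i : ℕ) (B : Finset (Finset α)) :
    SimpleGraph {b : Finset α // b ∈ B} where
  Adj b₁ b₂ := b₁ ≠ b₂ ∧ ((b₁ : Finset α) ∩ (b₂ : Finset α)).card = i
  symm := ⟨fun a b ⟨h1, h2⟩ => ⟨h1.symm, by rwa [Finset.inter_comm]⟩⟩
  loopless := ⟨fun a ⟨h, _⟩ => h rfl⟩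

instance [DecidableEq α] (i : ℕ) (B : Finset (Finset α)) :
    DecidableRel (BIG (α := α) i B).Adj := fun _ _ => inferInstanceAs (Decidable (_ ∧ _))

/-- `I` is a maximum independent set of `G`. -/
def IsMaxIndep {V : Type*} (G : SimpleGraph V) (I : Finset V) : Prop :=
  (∀ a ∈ I, ∀ b ∈ I, ¬ G.Adj a b) ∧
    ∀ J : Finset V, (∀ a ∈ J, ∀ b ∈ J, ¬ G.Adj a b) → J.card ≤ I.card

/-- A silver coloring of the `r`-regular graph `G` with respect to `I`: a proper
`(r+1)`-coloring under which every vertex of `I` is rainbow (all `r+1` colors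
appear on its closed neighborhood). -/
def SilverWith {V : Type*} (G : SimpleGraph V) (r : ℕ) (I : Finset V) : Prop :=
  ∃ c : V → Fin (r + 1), (∀ a b, G.Adj a b → c a ≠ c b) ∧
    ∀ x ∈ I, ∀ col : Fin (r + 1), ∃ y, (y = x ∨ G.Adj x y) ∧ c y = col

/-- `G` is silver: some silver coloring exists with respect to some maximum
independent set. -/
def IsSilver {V : Type*} (G : SimpleGraph V) (r : ℕ) : Prop :=
  ∃ I : Finset V, IsMaxIndep G I ∧ SilverWith G r I

theorem SilverWith.card_mul_sub_le {V : Type*} [Fintype V] [DecidableEq V] {G : SimpleGraph V}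
    [DecidableRel G.Adj] {r m : ℕ} {I : Finset V} (hS : SilverWith G r I)
    (hdeg : ∀ u ∈ I, G.degree u ≤ r) (hI : ∀ a ∈ I, ∀ b ∈ I, ¬ G.Adj a b)
    (hm : ∀ w ∉ I, #{u ∈ I | G.Adj u w} = m) (hIm : #I < 2 * m) :
    (r + 1) * (#I - m) ≤ #I := by
  obtain ⟨c, -, hrainbow⟩ := hS
  have hunique : ∀ u ∈ I, ∀ col, #{w ∈ {w | c w = col} | w = u ∨ G.Adj u w} = 1 := by
    intro u hu col
    have hinj : Set.InjOn c (insert u (G.neighborFinset u) : Finset V) := by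
      refine injOn_of_surjOn_of_card_le (t := univ) c (fun _ _ => mem_coe.2 (mem_univ _))
        (fun col _ => ?_) ?_
      · obtain ⟨w, hw, hcw⟩ := hrainbow u hu col
        exact ⟨w, by simpa [SimpleGraph.mem_neighborFinset] using hw, hcw⟩
      · rw [card_univ, Fintype.card_fin]
        exact (card_insert_le _ _).trans
          (by simpa [G.card_neighborFinset_eq_degree] using hdeg u hu)
    obtain ⟨w, hw, hcw⟩ := hrainbow u hu col
    refine card_eq_one.2 ⟨w, eq_singleton_iff_unique_mem.2 ⟨by simp [hw, hcw], fun w' hw' => ?_⟩⟩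
    simp only [mem_filter, mem_univ, true_and] at hw'
    exact hinj (by simpa [SimpleGraph.mem_neighborFinset] using hw'.2)
      (by simpa [SimpleGraph.mem_neighborFinset] using hw) (hw'.1.trans hcw.symm)
  have hcount : ∀ col, #I = #{w ∈ I | c w = col} + m * #{w | w ∉ I ∧ c w = col} := by
    intro col
    have h := sum_card_bipartiteAbove_eq_sum_card_bipartiteBelow (s := I) (t := {w | c w = col})
      (r := fun u w => w = u ∨ G.Adj u w)
    simp only [bipartiteAbove, bipartiteBelow] at h
    have hin : ∀ w ∈ I, #{u ∈ I | w = u ∨ G.Adj u w} = 1 := by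
      intro w hw
      refine card_eq_one.2 ⟨w, ?_⟩
      ext u
      simp only [mem_filter, mem_singleton]
      constructor
      · rintro ⟨hu, rfl | hadj⟩
        · rfl
        · exact absurd hadj (hI u hu w hw)
      · rintro rfl
        exact ⟨hw, Or.inl rfl⟩
    have hout : ∀ w ∉ I, #{u ∈ I | w = u ∨ G.Adj u w} = m := by
      intro w hwI
      rw [← hm w hwI]
      exact congrArg card (filter_congr fun u hu => by simp [show w ≠ u from fun h => hwI (h ▸ hu)])
    rw [sum_congr rfl fun u hu => hunique u hu col, sum_const, smul_eq_mul, mul_one,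
      ← sum_filter_add_sum_filter_not _ (· ∈ I),
      sum_const_nat fun w hw => hin w (mem_filter.1 hw).2,
      sum_const_nat fun w hw => hout w (mem_filter.1 hw).2] at h
    rw [h, mul_one, mul_comm]
    congr 2
    · ext w; simp [and_comm]
    · congr 1; ext w; simp [and_comm]
  have hge : ∀ col, #I - m ≤ #{w ∈ I | c w = col} := by
    intro col
    have h := hcount col
    set N := #{w | w ∉ I ∧ c w = col}
    have hN : N ≤ 1 := by
      by_contra! hN
      nlinarith
    interval_cases N <;> omega
  calc (r + 1) * (#I - m) = ∑ _col : Fin (r + 1), (#I - m) := by simp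
    _ ≤ ∑ col, #{w ∈ I | c w = col} := sum_le_sum fun col _ => hge col
    _ = #I := (card_eq_sum_card_fiberwise fun w _ => mem_univ (c w)).symm

theorem card_univ_filter_val {β : Type*} {s : Finset β} (p : β → Prop) [DecidablePred p] :
    #{w : s | p w} = #{b ∈ s | p b} := by
  rw [univ_eq_attach, filter_attach, card_map, card_attach]

theorem BIG_zero_adj [DecidableEq α] {B : Finset (Finset α)} {u w : {b // b ∈ B}} :
    (BIG 0 B).Adj u w ↔ u ≠ w ∧ Disjoint u.1 w.1 := by
  simp [BIG, disjoint_iff_inter_eq_empty]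

namespace IsSteiner

variable [Fintype α] [DecidableEq α] {v k : ℕ} {B : Finset (Finset α)}

theorem exists_mem_mem (hD : IsSteiner v k B) {x y : α} (hxy : x ≠ y) :
    ∃ b ∈ B, x ∈ b ∧ y ∈ b := by
  obtain ⟨b, hb⟩ := card_pos.1 (by rw [hD.2.2 x y hxy]; exact one_pos)
  exact ⟨b, (mem_filter.1 hb).1, (mem_filter.1 hb).2⟩

theorem eq_of_mem_inter (hD : IsSteiner v k B) {b₁ b₂ : Finset α} (hb₁ : b₁ ∈ B) (hb₂ : b₂ ∈ B)
    (hne : b₁ ≠ b₂) {x y : α} (hx : x ∈ b₁ ∩ b₂) (hy : y ∈ b₁ ∩ b₂) : x = y := by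
  by_contra hxy
  rw [mem_inter] at hx hy
  have h := hD.2.2 x y hxy
  have : 1 < #{b ∈ B | x ∈ b ∧ y ∈ b} :=
    one_lt_card.2 ⟨b₁, by simp [*], b₂, by simp [*], hne⟩
  omega

theorem card_inter_le_one (hD : IsSteiner v k B) {b₁ b₂ : Finset α} (hb₁ : b₁ ∈ B) (hb₂ : b₂ ∈ B)
    (hne : b₁ ≠ b₂) : #(b₁ ∩ b₂) ≤ 1 :=
  card_le_one.2 fun _ hx _ hy => hD.eq_of_mem_inter hb₁ hb₂ hne hx hy

theorem card_filter_mem_mul (hD : IsSteiner v k B) (x : α) :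
    #{b ∈ B | x ∈ b} * (k - 1) = v - 1 := by
  have hcover : univ.erase x = {b ∈ B | x ∈ b}.biUnion (·.erase x) := by
    ext y
    simp only [mem_erase, mem_univ, and_true, mem_biUnion, mem_filter]
    constructor
    · intro hy
      obtain ⟨b, hb, hxb, hyb⟩ := hD.exists_mem_mem (Ne.symm hy)
      exact ⟨b, ⟨hb, hxb⟩, hy, hyb⟩
    · rintro ⟨b, -, hy, -⟩
      exact hy
  have hdisj : (({b ∈ B | x ∈ b} : Finset _) : Set (Finset α)).PairwiseDisjoint (·.erase x) := by
    intro b₁ hb₁ b₂ hb₂ hne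
    simp only [mem_coe, mem_filter] at hb₁ hb₂
    refine disjoint_left.2 fun y hy₁ hy₂ => (mem_erase.1 hy₁).1 ?_
    exact hD.eq_of_mem_inter hb₁.1 hb₂.1 hne
      (mem_inter.2 ⟨(mem_erase.1 hy₁).2, (mem_erase.1 hy₂).2⟩) (mem_inter.2 ⟨hb₁.2, hb₂.2⟩)
  calc #{b ∈ B | x ∈ b} * (k - 1) = ∑ b ∈ {b ∈ B | x ∈ b}, #(b.erase x) := by
        refine (sum_const_nat fun b hb => ?_).symm
        rw [mem_filter] at hb
        rw [card_erase_of_mem hb.2, hD.2.1 b hb.1]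
    _ = #(univ.erase x) := by rw [hcover, card_biUnion hdisj]
    _ = v - 1 := by rw [card_erase_of_mem (mem_univ x), card_univ, hD.1]

theorem card_mul (hD : IsSteiner v k B) : #B * (k * (k - 1)) = v * (v - 1) := by
  have hinc : #B * k = ∑ x : α, #{b ∈ B | x ∈ b} := by
    rw [← sum_const_nat fun b hb => hD.2.1 b hb]
    simpa [bipartiteAbove, bipartiteBelow, filter_mem_eq_inter] using
      sum_card_bipartiteAbove_eq_sum_card_bipartiteBelow (s := B) (t := univ)
        (r := fun b x => x ∈ b)
  calc #B * (k * (k - 1)) = ∑ x : α, #{b ∈ B | x ∈ b} * (k - 1) := by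
        rw [← mul_assoc, hinc, sum_mul]
    _ = v * (v - 1) := by
        rw [sum_const_nat fun x _ => hD.card_filter_mem_mul x, card_univ, hD.1]

theorem card_filter_not_disjoint_mul (hD : IsSteiner v k B) {b : Finset α} (hb : b ∈ B) :
    #{b' ∈ B.erase b | ¬Disjoint b b'} * (k - 1) = k * (v - k) := by
  have hcover : {b' ∈ B.erase b | ¬Disjoint b b'} = b.biUnion ({b' ∈ B | · ∈ b'}.erase b) := by
    ext b'
    simp only [mem_filter, mem_erase, mem_biUnion, not_disjoint_iff]
    constructor
    · rintro ⟨⟨hne, hb'⟩, x, hxb, hxb'⟩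
      exact ⟨x, hxb, hne, hb', hxb'⟩
    · rintro ⟨x, hxb, hne, hb', hxb'⟩
      exact ⟨⟨hne, hb'⟩, x, hxb, hxb'⟩
  have hdisj : (b : Set α).PairwiseDisjoint ({b' ∈ B | · ∈ b'}.erase b) := by
    intro x hx y hy hxy
    refine disjoint_left.2 fun b' hx' hy' => hxy ?_
    simp only [mem_erase, mem_filter] at hx' hy'
    exact hD.eq_of_mem_inter hx'.2.1 hb hx'.1 (mem_inter.2 ⟨hx'.2.2, hx⟩)
      (mem_inter.2 ⟨hy'.2.2, hy⟩)
  calc #{b' ∈ B.erase b | ¬Disjoint b b'} * (k - 1)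
      = ∑ x ∈ b, #({b' ∈ B | x ∈ b'}.erase b) * (k - 1) := by
        rw [hcover, card_biUnion hdisj, sum_mul]
    _ = k * (v - k) := by
        rw [sum_const_nat fun x hx => ?_, hD.2.1 b hb]
        have hmem : b ∈ {b' ∈ B | x ∈ b'} := mem_filter.2 ⟨hb, hx⟩
        have hk : 1 ≤ k := hD.2.1 b hb ▸ card_pos.2 ⟨x, hx⟩
        rw [card_erase_of_mem hmem, Nat.sub_one_mul, hD.card_filter_mem_mul x]
        omega

theorem card_filter_mem_not_disjoint (hD : IsSteiner v k B) {b : Finset α} (hb : b ∈ B) {x : α}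
    (hx : x ∉ b) : #{b' ∈ B | x ∈ b' ∧ ¬Disjoint b b'} = k := by
  have h := sum_card_bipartiteAbove_eq_sum_card_bipartiteBelow (s := b)
    (t := {b' ∈ B | x ∈ b'}) (r := fun y b' => y ∈ b')
  simp only [bipartiteAbove, bipartiteBelow, filter_filter] at h
  rw [sum_const_nat fun y hy => hD.2.2 x y (ne_of_mem_of_not_mem hy hx).symm, hD.2.1 b hb,
    mul_one] at h
  rw [h, ← filter_filter, card_filter]
  refine sum_congr rfl fun b' hb' => ?_
  rw [mem_filter] at hb'
  rw [filter_mem_eq_inter]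
  split_ifs with hdis
  · rw [disjoint_iff_inter_eq_empty.1 hdis, card_empty]
  · exact le_antisymm (card_pos.2 (not_disjoint_iff_nonempty_inter.1 hdis))
      (hD.card_inter_le_one hb hb'.1 (ne_of_mem_of_not_mem' hb'.2 hx).symm)

theorem exists_forall_mem_of_intersecting (hD : IsSteiner v k B) {F : Finset (Finset α)}
    (hFB : F ⊆ B) (hF : (F : Set (Finset α)).Intersecting) (hcard : k ^ 2 - k + 2 ≤ #F) :
    ∃ x, ∀ b ∈ F, x ∈ b := by
  -- Pigeonhole on a block `b₁` gives a point `p` on `k + 1` blocks of `F`; a block of `F`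
  -- avoiding `p` would meet each of them in a different point.
  by_contra! hnone
  obtain ⟨b₁, hb₁⟩ : F.Nonempty := card_pos.1 (by omega)
  obtain ⟨p, hp, hpk⟩ : ∃ p ∈ b₁, k - 1 < #{b ∈ F.erase b₁ | p ∈ b} := by
    refine exists_lt_of_sum_lt ?_
    have hcover : F.erase b₁ ⊆ b₁.biUnion fun p => {b ∈ F.erase b₁ | p ∈ b} := fun b hb => by
      obtain ⟨p, hpb₁, hpb⟩ := not_disjoint_iff.1 (hF hb₁ (mem_of_mem_erase hb))
      exact mem_biUnion.2 ⟨p, hpb₁, mem_filter.2 ⟨hb, hpb⟩⟩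
    calc ∑ _p ∈ b₁, (k - 1) = k * (k - 1) := by
          rw [sum_const_nat fun _ _ => rfl, hD.2.1 b₁ (hFB hb₁)]
      _ < #(F.erase b₁) := by
        rw [card_erase_of_mem hb₁, Nat.mul_sub_one, ← sq]
        omega
      _ ≤ _ := (card_le_card hcover).trans card_biUnion_le
  have hthrough : k + 1 ≤ #{b ∈ F | p ∈ b} := by
    have hsub : insert b₁ {b ∈ F.erase b₁ | p ∈ b} ⊆ {b ∈ F | p ∈ b} := by
      intro b hb
      rcases mem_insert.1 hb with rfl | hb
      · exact mem_filter.2 ⟨hb₁, hp⟩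
      · exact filter_subset_filter _ (erase_subset _ _) hb
    have := card_le_card hsub
    rw [card_insert_of_notMem fun h => (mem_erase.1 (mem_filter.1 h).1).1 rfl] at this
    omega
  obtain ⟨b₂, hb₂, hpb₂⟩ := hnone p
  have hle : #{b ∈ F | p ∈ b} ≤ k := by
    rw [← hD.card_filter_mem_not_disjoint (hFB hb₂) hpb₂]
    refine card_le_card fun b hb => ?_
    rw [mem_filter] at hb ⊢
    exact ⟨hFB hb.1, hb.2, hF hb₂ hb.1⟩
  omega

theorem degree_BIG_zero_mul (hD : IsSteiner v k B) (u : {b // b ∈ B}) :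
    (BIG 0 B).degree u * (k * (k - 1)) + k * (k - 1) + k ^ 2 * (v - k) = v * (v - 1) := by
  have hdeg : (BIG 0 B).degree u = #{b ∈ B.erase u | Disjoint u.1 b} := by
    rw [← SimpleGraph.card_neighborFinset_eq_degree, SimpleGraph.neighborFinset_eq_filter]
    simp_rw [BIG_zero_adj, ← Subtype.coe_ne_coe]
    rw [card_univ_filter_val fun b => u.1 ≠ b ∧ Disjoint u.1 b]
    congr 1
    ext b
    simp [ne_comm, and_assoc, and_left_comm]
  have hsplit : (BIG 0 B).degree u + #{b ∈ B.erase u | ¬Disjoint u.1 b} + 1 = #B := by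
    rw [hdeg, card_filter_add_card_filter_not, card_erase_add_one u.2]
  calc (BIG 0 B).degree u * (k * (k - 1)) + k * (k - 1) + k ^ 2 * (v - k)
      = ((BIG 0 B).degree u + #{b ∈ B.erase u | ¬Disjoint u.1 b} + 1) * (k * (k - 1)) := by
        rw [sq, mul_assoc, ← hD.card_filter_not_disjoint_mul u.2]
        ring
    _ = v * (v - 1) := by rw [hsplit, hD.card_mul]

theorem isRegularOfDegree_BIG_zero (hD : IsSteiner v k B) (hk : 2 ≤ k) (hv : k ^ 2 ≤ v) :
    (BIG 0 B).IsRegularOfDegree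
      ((v ^ 2 + k ^ 3 - v * (k ^ 2 + 1) - k ^ 2 + k) / (k * (k - 1))) := by
  intro u
  have h := hD.degree_BIG_zero_mul u
  have hkk : 0 < k * (k - 1) := Nat.mul_pos (by omega) (by omega)
  refine (Nat.div_eq_of_eq_mul_left hkk ?_).symm
  have hkv : k ≤ v := le_trans (by nlinarith) hv
  have hk3 : 2 * k ^ 2 ≤ k ^ 3 := by nlinarith
  have e1 : v * (k ^ 2 + 1) + k ^ 2 ≤ v ^ 2 + k ^ 3 := by nlinarith
  zify [hkv, (by omega : 1 ≤ k), (by omega : 1 ≤ v)] at h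
  -- `k² ≤ v` makes every ℕ subtraction in the formula exact.
  zify [(by omega : v * (k ^ 2 + 1) ≤ v ^ 2 + k ^ 3),
    (by omega : k ^ 2 ≤ v ^ 2 + k ^ 3 - v * (k ^ 2 + 1)), (by omega : 1 ≤ k)]
  linear_combination -h

theorem lt_card_filter_mem (hD : IsSteiner v k B) (hk : 2 ≤ k)
    (hv : k ^ 3 - 2 * k ^ 2 + 2 * k < v) (x : α) : k ^ 2 - k + 1 < #{b ∈ B | x ∈ b} := by
  have h := hD.card_filter_mem_mul x
  by_contra! hn
  have hmul := Nat.mul_le_mul_right (k - 1) hn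
  have hk3 : 2 * k ^ 2 ≤ k ^ 3 := by nlinarith
  have hkk : k ≤ k ^ 2 := by nlinarith
  have e : (k ^ 2 - k + 1) * (k - 1) + 1 = k ^ 3 - 2 * k ^ 2 + 2 * k := by
    zify [hk3, hkk, (by omega : 1 ≤ k)]
    ring
  omega

theorem exists_forall_mem_iff_of_isMaxIndep (hD : IsSteiner v k B) (hk : 2 ≤ k)
    (hv : k ^ 3 - 2 * k ^ 2 + 2 * k < v) {I : Finset {b // b ∈ B}} (hI : IsMaxIndep (BIG 0 B) I) :
    ∃ x, ∀ u, u ∈ I ↔ x ∈ u.1 := by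
  have hpencil_indep : ∀ x, ∀ a ∈ ({u | x ∈ u.1} : Finset {b // b ∈ B}),
      ∀ b ∈ ({u | x ∈ u.1} : Finset {b // b ∈ B}), ¬(BIG 0 B).Adj a b := by
    intro x a ha b hb hab
    simp only [mem_filter, mem_univ, true_and] at ha hb
    exact disjoint_left.1 (BIG_zero_adj.1 hab).2 ha hb
  have hpencil_card (x : α) : #({u | x ∈ u.1} : Finset {b // b ∈ B}) = #{b ∈ B | x ∈ b} :=
    card_univ_filter_val (x ∈ ·)
  obtain ⟨x₀⟩ : Nonempty α := Fintype.card_pos_iff.1 (by rw [hD.1]; omega)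
  have hIcard : #{b ∈ B | x₀ ∈ b} ≤ #I := hpencil_card x₀ ▸ hI.2 _ (hpencil_indep x₀)
  have hintersecting : ((I.map (Function.Embedding.subtype _) : Finset _) :
      Set (Finset α)).Intersecting := by
    simp only [coe_map, Function.Embedding.coe_subtype]
    rintro _ ⟨a, ha, rfl⟩ _ ⟨b, hb, rfl⟩ hab
    by_cases h : a = b
    · subst h
      have : (a.1).Nonempty := card_pos.1 (by rw [hD.2.1 _ a.2]; omega)
      exact this.ne_empty (disjoint_self.1 hab)
    · exact hI.1 a ha b hb (BIG_zero_adj.2 ⟨h, hab⟩)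
  obtain ⟨x, hx⟩ :=
    hD.exists_forall_mem_of_intersecting (F := I.map (Function.Embedding.subtype _))
    (fun b hb => by obtain ⟨u, -, rfl⟩ := mem_map.1 hb; exact u.2) hintersecting
    (by have := hD.lt_card_filter_mem hk hv x₀; rw [card_map]; omega)
  have hsub : I ⊆ ({u | x ∈ u.1} : Finset {b // b ∈ B}) := fun u hu =>
    mem_filter.2 ⟨mem_univ u, hx _ (mem_map_of_mem _ hu)⟩
  have hsame : #{b ∈ B | x ∈ b} = #{b ∈ B | x₀ ∈ b} :=
    Nat.eq_of_mul_eq_mul_right (by omega : 0 < k - 1)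
      ((hD.card_filter_mem_mul x).trans (hD.card_filter_mem_mul x₀).symm)
  have hIeq := eq_of_subset_of_card_le hsub (by rw [hpencil_card, hsame]; exact hIcard)
  exact ⟨x, fun u => by rw [hIeq]; simp⟩

theorem card_filter_mem_BIG_zero_adj (hD : IsSteiner v k B) {x : α} {w : {b // b ∈ B}}
    (hxw : x ∉ w.1) : #{u : {b // b ∈ B} | x ∈ u.1 ∧ (BIG 0 B).Adj u w} = #{b ∈ B | x ∈ b} - k := by
  have hadj : ∀ u : {b // b ∈ B}, x ∈ u.1 → ((BIG 0 B).Adj u w ↔ Disjoint u.1 w.1) := fun u hu =>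
    BIG_zero_adj.trans (and_iff_right fun h => hxw (h ▸ hu))
  rw [filter_congr fun u _ => and_congr_right (hadj u), card_univ_filter_val
    fun b => x ∈ b ∧ Disjoint b w.1, ← hD.card_filter_mem_not_disjoint w.2 hxw,
    ← card_filter_add_card_filter_not (s := {b ∈ B | x ∈ b}) (Disjoint w.1 ·), filter_filter,
    filter_filter]
  simp_rw [disjoint_comm (a := w.1)]
  omega

theorem card_filter_mem_lt_degree_BIG_zero (hD : IsSteiner v k B) (hk : 2 ≤ k) (hv : k ^ 2 < v)
    (x : α) (u : {b // b ∈ B}) : #{b ∈ B | x ∈ b} < ((BIG 0 B).degree u + 1) * k := by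
  have hn := hD.card_filter_mem_mul x
  have hd := hD.degree_BIG_zero_mul u
  by_contra! hle
  have hmul := Nat.mul_le_mul_right (k - 1) hle
  have hkv : k ≤ v := le_trans (by nlinarith) hv.le
  zify [hkv, (by omega : 1 ≤ k), (by omega : 1 ≤ v)] at hn hd hmul
  have hk' : (2 : ℤ) ≤ k := by exact_mod_cast hk
  have hv' : (k : ℤ) ^ 2 < v := by exact_mod_cast hv
  -- `hle` amounts to `(v - 1)² ≤ k² (v - k)`, while `v - 1 ≥ k²`.
  nlinarith

end IsSteiner

theorem stmt10_general [Fintype α] [DecidableEq α] (v k : ℕ) (B : Finset (Finset α))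
    (hk : 2 < k) (hD : IsSteiner v k B)
    (hv : v > k ^ 3 - 2 * k ^ 2 + 2 * k) :
    ¬ IsSilver (BIG 0 B) ((v ^ 2 + k ^ 3 - v * (k ^ 2 + 1) - k ^ 2 + k) / (k * (k - 1))) := by
  rintro ⟨I, hI, hS⟩
  have hk3 : 3 * k ^ 2 ≤ k ^ 3 := by nlinarith
  have hkv : k ^ 2 < v := by omega
  obtain ⟨x, hIx⟩ := hD.exists_forall_mem_iff_of_isMaxIndep hk.le hv hI
  have hIn : #I = #{b ∈ B | x ∈ b} := by
    rw [← card_univ_filter_val]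
    exact congrArg card (ext fun u => by simp [hIx])
  set n := #{b ∈ B | x ∈ b}
  have hn : 2 * k < n := by
    have := hD.lt_card_filter_mem hk.le hv x
    have : 3 * k ≤ k ^ 2 := by nlinarith
    omega
  have hreg := hD.isRegularOfDegree_BIG_zero hk.le hkv.le
  obtain ⟨u, -⟩ : I.Nonempty := card_pos.1 (by omega)
  have hlt := hreg.degree_eq u ▸ hD.card_filter_mem_lt_degree_BIG_zero hk.le hkv x u
  have hle := hS.card_mul_sub_le (m := n - k) (fun u _ => (hreg.degree_eq u).le) hI.1
    (fun w hw => by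
      rw [← hD.card_filter_mem_BIG_zero_adj ((hIx w).not.1 hw)]
      exact congrArg card (ext fun u => by simp [hIx]))
    (by omega)
  rw [hIn, Nat.sub_sub_self (by omega)] at hle
  exact hle.not_gt hlt

/-- For `v > k³ - 2k² + 2k`, the 0-block intersection graph of an `S(2,k,v)`,
which is `(v² + k³ - v(k²+1) - k² + k)/(k(k-1))`-regular, is not silver. -/
theorem stmt10 [Fintype α] [DecidableEq α] (v k : ℕ) (B : Finset (Finset α))
    (hk : 2 < k) (hkv : k < v) (hD : IsSteiner v k B)
    (hv : v > k ^ 3 - 2 * k ^ 2 + 2 * k) :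
    ¬ IsSilver (BIG 0 B) ((v ^ 2 + k ^ 3 - v * (k ^ 2 + 1) - k ^ 2 + k) / (k * (k - 1))) :=
  stmt10_general v k B hk hD hv
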